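/- arXiv:2404.13230 — 2 statements merged into one kernel-verified Lean document; each statement's English description precedes it below -/
import Mathlib

section
/- Let n ≥ k ≥ 0 and let V_1, ..., V_k be subspaces of F_q^n such that dim(⋂_{i∈Ω} V_i) ≤ k - |Ω| for every nonempty Ω ⊆ [k]. Then there exist subspaces V'_i ⊇ V_i of F_q^n for i = 1,...,k such that dim(⋂_{i∈Ω} V'_i) ≤ k - |Ω| for every nonempty Ω ⊆ [k], and dim V'_i = k - 1 for all i ∈ [k]. -/
/-!
Extend the `V i` one vector at a time. Call `Ω` tight if `dim ⋂_{i ∈ Ω} V i = k - |Ω|`.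
Since `Ω ↦ dim ⋂_{i ∈ Ω} V i` is supermodular, two tight sets with a common element have a tight
intersection, so the tight sets containing `j` have a least element `Ω₀`. If `dim V j ≤ k - 2`,
the only way adding a vector `v` to `V j` can break the bound is for a tight `Ω ∋ j` with
`v ∈ V j + ⋂_{i ∈ Ω \ {j}} V i`, and all these sums lie in `V j + ⋂_{i ∈ Ω₀ \ {j}} V i`, of
dimension at most `dim V j + 1 < n`. A vector outside it can be added. A single proper
subspace is needed: over a finite field, a space can be a union of finitely many proper ones.
-/

open Module Finset Function

namespace Finset

variable {ι α : Type*} [DecidableEq ι] [SemilatticeInf α] [OrderTop α]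

theorem inf_update_of_notMem (f : ι → α) {s : Finset ι} {j : ι} (hj : j ∉ s) (a : α) :
    s.inf (update f j a) = s.inf f :=
  inf_congr rfl fun _ hi => update_of_ne (ne_of_mem_of_not_mem hi hj) a f

theorem inf_update_of_mem (f : ι → α) {s : Finset ι} {j : ι} (hj : j ∈ s) (a : α) :
    s.inf (update f j a) = a ⊓ (s.erase j).inf f := by
  rw [← insert_erase hj, inf_insert, update_self, erase_insert (notMem_erase j s),
    inf_update_of_notMem f (notMem_erase j s)]

end Finset

namespace Submodule

variable {K E : Type*} [DivisionRing K] [AddCommGroup E] [Module K E]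

theorem sup_span_singleton_inf_eq_of_notMem {A W : Submodule K E} {v : E} (hv : v ∉ A ⊔ W) :
    (A ⊔ K ∙ v) ⊓ W = A ⊓ W := by
  refine le_antisymm (fun x hx => ?_) (inf_le_inf_right _ le_sup_left)
  obtain ⟨hxA, hxW⟩ := mem_inf.mp hx
  obtain ⟨a, ha, _, hy, rfl⟩ := mem_sup.mp hxA
  obtain ⟨c, rfl⟩ := mem_span_singleton.mp hy
  rcases eq_or_ne c 0 with rfl | hc
  · simpa [ha] using hxW
  · have hcv : c • v ∈ A ⊔ W := by
      simpa using sub_mem (mem_sup_right hxW) (mem_sup_left ha : a ∈ A ⊔ W)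
    exact absurd ((smul_mem_iff _ hc).mp hcv) hv

variable [FiniteDimensional K E]

theorem finrank_inf_add_finrank_le_of_le {A C : Submodule K E} (W : Submodule K E) (hAC : A ≤ C) :
    finrank K ↥(C ⊓ W) + finrank K A ≤ finrank K ↥(A ⊓ W) + finrank K C := by
  have h := finrank_sup_add_finrank_inf_eq (C ⊓ W) A
  rw [inf_right_comm, inf_eq_right.mpr hAC] at h
  have := finrank_mono (sup_le inf_le_left hAC : C ⊓ W ⊔ A ≤ C)
  omega

end Submodule

section GenericKernelPattern

variable {K E ι : Type*} [DivisionRing K] [AddCommGroup E] [Module K E]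

def IsGenericKernelPattern [Fintype ι] (V : ι → Submodule K E) : Prop :=
  ∀ Ω : Finset ι, Ω.Nonempty → finrank K ↥(Ω.inf V) ≤ Fintype.card ι - #Ω

def IsTight [Fintype ι] (V : ι → Submodule K E) (Ω : Finset ι) : Prop :=
  finrank K ↥(Ω.inf V) = Fintype.card ι - #Ω

theorem IsGenericKernelPattern.finrank_le [Fintype ι] {V : ι → Submodule K E}
    (hV : IsGenericKernelPattern V) (i : ι) : finrank K ↥(V i) ≤ Fintype.card ι - 1 := by
  have := hV {i} (singleton_nonempty i)
  rwa [inf_singleton, card_singleton] at this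

variable [FiniteDimensional K E]

theorem finrank_inf_add_finrank_inf_le_union_inter [DecidableEq ι] (V : ι → Submodule K E)
    (s t : Finset ι) :
    finrank K ↥(s.inf V) + finrank K ↥(t.inf V) ≤
      finrank K ↥((s ∪ t).inf V) + finrank K ↥((s ∩ t).inf V) := by
  rw [← Submodule.finrank_sup_add_finrank_inf_eq, inf_union, add_comm]
  gcongr
  exact Submodule.finrank_mono (sup_le (inf_mono inter_subset_left) (inf_mono inter_subset_right))

variable [Fintype ι]

namespace IsGenericKernelPattern

variable {V : ι → Submodule K E} (hV : IsGenericKernelPattern V)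
include hV

theorem isTight_inter [DecidableEq ι] {s t : Finset ι} (hs : IsTight V s) (ht : IsTight V t)
    (hst : (s ∩ t).Nonempty) : IsTight V (s ∩ t) := by
  have hunion := hV (s ∪ t) (hst.mono (inter_subset_left.trans subset_union_left))
  have hinter := hV (s ∩ t) hst
  have := finrank_inf_add_finrank_inf_le_union_inter V s t
  have := card_union_add_card_inter s t
  have := card_le_univ (s ∪ t)
  unfold IsTight at *
  omega

theorem exists_isTight_subset {j : ι} (h : ∃ Ω, j ∈ Ω ∧ IsTight V Ω) :
    ∃ Ω₀, j ∈ Ω₀ ∧ IsTight V Ω₀ ∧ ∀ Ω, j ∈ Ω → IsTight V Ω → Ω₀ ⊆ Ω := by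
  classical
  obtain ⟨Ω₁, hΩ₁⟩ := h
  obtain ⟨Ω₀, hΩ₀, hmin⟩ := (univ.filter fun Ω => j ∈ Ω ∧ IsTight V Ω).exists_min_image card
    ⟨Ω₁, by simpa using hΩ₁⟩
  simp only [mem_filter, mem_univ, true_and] at hΩ₀ hmin
  refine ⟨Ω₀, hΩ₀.1, hΩ₀.2, fun Ω hj hΩ => ?_⟩
  have hcap : j ∈ Ω₀ ∩ Ω := mem_inter.mpr ⟨hΩ₀.1, hj⟩
  have hle := hmin _ ⟨hcap, hV.isTight_inter hΩ₀.2 hΩ ⟨j, hcap⟩⟩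
  exact inter_eq_left.mp (eq_of_subset_of_card_le inter_subset_left hle)

theorem finrank_sup_inf_erase_le [DecidableEq ι] {Ω : Finset ι} {j : ι} (hj : j ∈ Ω)
    (hΩ : IsTight V Ω) (hne : (Ω.erase j).Nonempty) :
    finrank K ↥(V j ⊔ (Ω.erase j).inf V) ≤ finrank K ↥(V j) + 1 := by
  have h := Submodule.finrank_sup_add_finrank_inf_eq (V j) ((Ω.erase j).inf V)
  rw [← inf_insert, insert_erase hj, hΩ] at h
  have herase := hV _ hne
  rw [card_erase_of_mem hj] at herase
  have := card_le_univ Ω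
  have := card_pos.mpr ⟨j, hj⟩
  omega

theorem exists_notMem_sup_of_isTight [DecidableEq ι] (hkn : Fintype.card ι ≤ finrank K E)
    {j : ι} (hd : finrank K ↥(V j) + 2 ≤ Fintype.card ι) :
    ∃ v, v ∉ V j ∧ ∀ Ω, j ∈ Ω → IsTight V Ω → v ∉ V j ⊔ (Ω.erase j).inf V := by
  suffices ∃ P : Submodule K E, finrank K P < finrank K E ∧ V j ≤ P ∧
      ∀ Ω, j ∈ Ω → IsTight V Ω → (Ω.erase j).inf V ≤ P by
    obtain ⟨P, hP, hjP, hΩP⟩ := this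
    obtain ⟨v, -, hv⟩ := SetLike.exists_of_lt (Submodule.lt_top_of_finrank_lt_finrank hP)
    exact ⟨v, fun h => hv (hjP h), fun Ω hj hΩ h => hv (sup_le hjP (hΩP Ω hj hΩ) h)⟩
  by_cases htight : ∃ Ω, j ∈ Ω ∧ IsTight V Ω
  · obtain ⟨Ω₀, hj, hΩ₀, hmin⟩ := hV.exists_isTight_subset htight
    have hne : (Ω₀.erase j).Nonempty := by
      by_contra h
      rw [not_nonempty_iff_eq_empty, erase_eq_empty_iff] at h
      rcases h with rfl | rfl
      · exact notMem_empty j hj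
      · rw [IsTight, inf_singleton, card_singleton] at hΩ₀
        omega
    have := hV.finrank_sup_inf_erase_le hj hΩ₀ hne
    exact ⟨_, by omega, le_sup_left,
      fun Ω hjΩ hΩ => (inf_mono (erase_subset_erase j (hmin Ω hjΩ hΩ))).trans le_sup_right⟩
  · push Not at htight
    exact ⟨V j, by omega, le_rfl, fun Ω hj hΩ => absurd hΩ (htight Ω hj)⟩

theorem exists_update_sup_span [DecidableEq ι] (hkn : Fintype.card ι ≤ finrank K E) {j : ι}
    (hd : finrank K ↥(V j) + 2 ≤ Fintype.card ι) :
    ∃ v ∉ V j, IsGenericKernelPattern (update V j (V j ⊔ K ∙ v)) := by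
  obtain ⟨v, hvj, hv⟩ := hV.exists_notMem_sup_of_isTight hkn hd
  refine ⟨v, hvj, fun Ω hΩ => ?_⟩
  by_cases hj : j ∈ Ω
  · have hsplit : Ω.inf V = V j ⊓ (Ω.erase j).inf V := by rw [← inf_insert, insert_erase hj]
    rw [inf_update_of_mem V hj]
    by_cases ht : IsTight V Ω
    · rw [Submodule.sup_span_singleton_inf_eq_of_notMem (hv Ω hj ht), ← hsplit]
      exact hV Ω hΩ
    · have := Submodule.finrank_inf_add_finrank_le_of_le ((Ω.erase j).inf V)
        (le_sup_left : V j ≤ V j ⊔ K ∙ v)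
      rw [Submodule.finrank_sup_span_singleton hvj, ← hsplit] at this
      have := hV Ω hΩ
      unfold IsTight at ht
      omega
  · rw [inf_update_of_notMem V hj]
    exact hV Ω hΩ

end IsGenericKernelPattern

theorem IsGenericKernelPattern.exists_le_finrank_eq [DecidableEq ι] {V : ι → Submodule K E}
    (hV : IsGenericKernelPattern V) (hkn : Fintype.card ι ≤ finrank K E) :
    ∃ V' : ι → Submodule K E, (∀ i, V i ≤ V' i) ∧ IsGenericKernelPattern V' ∧
      ∀ i, finrank K ↥(V' i) = Fintype.card ι - 1 := by
  by_cases hall : ∀ i, finrank K ↥(V i) = Fintype.card ι - 1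
  · exact ⟨V, fun _ => le_rfl, hV, hall⟩
  obtain ⟨j, hj⟩ := not_forall.mp hall
  have hd : finrank K ↥(V j) + 2 ≤ Fintype.card ι := by
    have := hV.finrank_le j
    omega
  obtain ⟨v, hv, hgen⟩ := hV.exists_update_sup_span hkn hd
  have hle : V ≤ update V j (V j ⊔ K ∙ v) := le_update_iff.mpr ⟨le_sup_left, fun _ _ => le_rfl⟩
  obtain ⟨V', hle', hV', hfin⟩ := hgen.exists_le_finrank_eq hkn
  exact ⟨V', fun i => (hle i).trans (hle' i), hV', hfin⟩
termination_by ∑ i, (Fintype.card ι - 1 - finrank K ↥(V i))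
decreasing_by
  refine sum_lt_sum (fun i _ => ?_) ⟨j, mem_univ j, ?_⟩
  · have := Submodule.finrank_mono (hle i)
    omega
  · rw [update_self, Submodule.finrank_sup_span_singleton hv]
    omega

end GenericKernelPattern

/-- Hall's theorem for vector spaces, dual version: let `n ≥ k ≥ 0` and `V_1, …, V_k` be
subspaces of `F_q^n` with `dim (⋂_{i ∈ Ω} V_i) ≤ k - |Ω|` for every nonempty `Ω ⊆ [k]`.
Then there exist subspaces `V'_i ⊇ V_i` with the same property and `dim V'_i = k - 1`. -/
theorem hall_vector_spaces_dual {Fq : Type*} [Field Fq] {n k : ℕ} (hkn : k ≤ n)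
    (V : Fin k → Submodule Fq (Fin n → Fq))
    (h : ∀ Ω : Finset (Fin k), Ω.Nonempty →
      Module.finrank Fq ↥(⨅ i ∈ Ω, V i) ≤ k - Ω.card) :
    ∃ V' : Fin k → Submodule Fq (Fin n → Fq),
      (∀ i, V i ≤ V' i) ∧
      (∀ Ω : Finset (Fin k), Ω.Nonempty →
        Module.finrank Fq ↥(⨅ i ∈ Ω, V' i) ≤ k - Ω.card) ∧
      (∀ i, Module.finrank Fq ↥(V' i) = k - 1) := by
  have hV : IsGenericKernelPattern V := fun Ω hΩ => by
    rw [Finset.inf_eq_iInf, Fintype.card_fin]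
    exact h Ω hΩ
  obtain ⟨V', hle, hV', hfin⟩ := hV.exists_le_finrank_eq (by simpa using hkn)
  refine ⟨V', hle, fun Ω hΩ => ?_, by simpa using hfin⟩
  have := hV' Ω hΩ
  rwa [Fintype.card_fin, Finset.inf_eq_iInf] at this
end

section
/- Let 1 ≤ k ≤ n and let α_1, ..., α_n be elements of an extension field F of F_q that are linearly independent over F_q. Then the Gabidulin code G_{n,k}(α_1,...,α_n) = {(f(α_1),...,f(α_n)) : f(X) = ∑_{i=1}^k c_i X^{q^{i-1}}, c_i ∈ F} is an MRD code: it is a k-dimensional F-subspace of F^n, and every nonzero codeword v satisfies rank_{F_q}(v) ≥ n - k + 1. -/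
/-!
A nonzero message `c` is encoded by evaluating the linearized polynomial
`f = ∑ cᵢ X^{q^i}` at the `αⱼ`. The map `x ↦ f(x)` is `F_q`-linear, so the `F_q`-span of the
codeword is the image of the `n`-dimensional space `U = span(α)`, and by rank–nullity its
dimension is at least `n - dim ker f`. The kernel consists of roots of `f`, whose degree is at most
`q^{k-1}`; being an `F_q`-space it has `q^{dim ker f}` elements, so `dim ker f ≤ k - 1`. For
`k ≤ n` this lower bound is positive, which also makes the encoding injective and gives the
dimension `k`.
-/

/-- The Gabidulin code `G_{n,k}(α_1, …, α_n)`: the `F`-row space of the Moore matrix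
`(α_j^{q^{i-1}})_{i ∈ [k], j ∈ [n]}`, i.e. all evaluation vectors
`(f(α_1), …, f(α_n))` of `q`-linearized polynomials `f(X) = ∑_{i=1}^k c_i X^{q^{i-1}}`
with coefficients `c_i ∈ F`. -/
noncomputable def gabidulin (Fq : Type*) [Field Fq] [Fintype Fq] {F : Type*} [Field F]
    [Algebra Fq F] {n : ℕ} (k : ℕ) (α : Fin n → F) : Submodule F (Fin n → F) :=
  LinearMap.range (Matrix.vecMulLinear
    (Matrix.of fun (i : Fin k) (j : Fin n) => α j ^ (Fintype.card Fq ^ (i : ℕ))))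

open Polynomial Module

section LinearAlgebra

variable {K V W : Type*} [Field K] [AddCommGroup V] [Module K V] [AddCommGroup W] [Module K W]

theorem card_le_finrank_span_range_comp_add_finrank_ker {n : ℕ} {α : Fin n → V}
    (hα : LinearIndependent K α) (f : V →ₗ[K] W) [FiniteDimensional K (LinearMap.ker f)] :
    n ≤ finrank K (Submodule.span K (Set.range (f ∘ α))) + finrank K (LinearMap.ker f) := by
  set g := Fintype.linearCombination K (f ∘ α)
  have hg : g = f ∘ₗ Fintype.linearCombination K α := by ext; simp [g]
  have hker : (LinearMap.ker g).map (Fintype.linearCombination K α) ≤ LinearMap.ker f := by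
    rintro _ ⟨a, ha, rfl⟩
    simpa [hg] using ha
  have hrank := g.finrank_range_add_finrank_ker
  rw [Fintype.range_linearCombination, finrank_fin_fun] at hrank
  have hkerle := Submodule.finrank_mono hker
  rw [← (Submodule.equivMapOfInjective _ hα.fintypeLinearCombination_injective _).finrank_eq]
    at hkerle
  omega

end LinearAlgebra

section RootsOfPolynomials

variable {K L : Type*} [Field K] [Field L] [Algebra K L] (W : Submodule K L) {P : L[X]}

theorem Submodule.finite_of_forall_isRoot (hP : P ≠ 0) (hW : ∀ x ∈ W, P.IsRoot x) : Finite W :=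
  ((finite_setOfPred_isRoot hP).subset hW).to_subtype

theorem Submodule.pow_finrank_le_natDegree_of_forall_isRoot [Fintype K] (hP : P ≠ 0)
    (hW : ∀ x ∈ W, P.IsRoot x) : Fintype.card K ^ finrank K W ≤ P.natDegree := by
  classical
  have := W.finite_of_forall_isRoot hP hW
  have hsub : (W : Set L) ⊆ P.roots.toFinset := fun x hx => by simpa [hP] using hW x hx
  calc Fintype.card K ^ finrank K W = Nat.card W := by
        rw [Module.natCard_eq_pow_finrank (K := K), Nat.card_eq_fintype_card]
    _ = (W : Set L).ncard := Nat.card_coe_set_eq _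
    _ ≤ (P.roots.toFinset : Set L).ncard := Set.ncard_le_ncard hsub (Finset.finite_toSet _)
    _ = P.roots.toFinset.card := Set.ncard_coe_finset _
    _ ≤ P.natDegree := (Multiset.toFinset_card_le _).trans (card_roots' P)

end RootsOfPolynomials

section Linearized

variable (Fq : Type*) [Field Fq] [Fintype Fq] {F : Type*} [Field F] {k : ℕ}

local notation "q" => Fintype.card Fq

noncomputable def linearizedPoly (c : Fin k → F) : F[X] :=
  ∑ i, C (c i) * X ^ q ^ (i : ℕ)

theorem coeff_linearizedPoly_pow (c : Fin k → F) (i : Fin k) :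
    (linearizedPoly Fq c).coeff (q ^ (i : ℕ)) = c i := by
  have hinj := Nat.pow_right_injective (Fintype.one_lt_card (α := Fq))
  simp [linearizedPoly, coeff_C_mul, coeff_X_pow, hinj.eq_iff, Fin.val_inj]

theorem linearizedPoly_ne_zero {c : Fin k → F} (hc : c ≠ 0) : linearizedPoly Fq c ≠ 0 := by
  obtain ⟨i, hi⟩ := Function.ne_iff.mp hc
  exact fun h => hi (by simpa [h] using (coeff_linearizedPoly_pow Fq c i).symm)

theorem natDegree_linearizedPoly_le (c : Fin k → F) :
    (linearizedPoly Fq c).natDegree ≤ q ^ (k - 1) :=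
  natDegree_sum_le_of_forall_le _ _ fun i _ => (natDegree_C_mul_X_pow_le _ _).trans
    (Nat.pow_le_pow_right Fintype.card_pos (by omega))

variable [Algebra Fq F]

/-- Evaluation of `linearizedPoly Fq c`, written as a combination of powers of the Frobenius
`x ↦ x ^ q` so that its `F_q`-linearity comes for free. -/
noncomputable def linearizedMap (c : Fin k → F) : F →ₗ[Fq] F :=
  ∑ i, c i • (FiniteField.frobeniusAlgHom Fq F ^ (i : ℕ)).toLinearMap

theorem linearizedMap_apply (c : Fin k → F) (x : F) :
    linearizedMap Fq c x = ∑ i, c i * x ^ q ^ (i : ℕ) := by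
  simp [linearizedMap, FiniteField.coe_frobeniusAlgHom, pow_iterate]

theorem isRoot_linearizedPoly_iff (c : Fin k → F) (x : F) :
    (linearizedPoly Fq c).IsRoot x ↔ x ∈ LinearMap.ker (linearizedMap Fq c) := by
  simp [linearizedPoly, linearizedMap_apply, eval_finsetSum]

theorem finite_ker_linearizedMap {c : Fin k → F} (hc : c ≠ 0) :
    Finite (LinearMap.ker (linearizedMap Fq c)) :=
  Submodule.finite_of_forall_isRoot _ (linearizedPoly_ne_zero Fq hc) fun x =>
    (isRoot_linearizedPoly_iff Fq c x).mpr

theorem finrank_ker_linearizedMap_le {c : Fin k → F} (hc : c ≠ 0) :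
    finrank Fq (LinearMap.ker (linearizedMap Fq c)) ≤ k - 1 := by
  have hcard := Submodule.pow_finrank_le_natDegree_of_forall_isRoot _
    (linearizedPoly_ne_zero Fq hc) fun x => (isRoot_linearizedPoly_iff Fq c x).mpr
  exact (Nat.pow_le_pow_iff_right Fintype.one_lt_card).mp
    (hcard.trans (natDegree_linearizedPoly_le Fq c))

theorem le_finrank_span_range_linearizedMap_comp {n : ℕ} {α : Fin n → F}
    (hα : LinearIndependent Fq α) {c : Fin k → F} (hc : c ≠ 0) :
    n + 1 - k ≤ finrank Fq (Submodule.span Fq (Set.range (linearizedMap Fq c ∘ α))) := by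
  obtain ⟨i, -⟩ := Function.ne_iff.mp hc
  have hk := i.pos
  have := finite_ker_linearizedMap Fq hc
  have hrank := card_le_finrank_span_range_comp_add_finrank_ker hα (linearizedMap Fq c)
  have hker := finrank_ker_linearizedMap_le Fq hc
  omega

theorem vecMulLinear_moore_eq_linearizedMap_comp {n : ℕ} (α : Fin n → F) (c : Fin k → F) :
    Matrix.vecMulLinear (Matrix.of fun (i : Fin k) (j : Fin n) => α j ^ q ^ (i : ℕ)) c =
      linearizedMap Fq c ∘ α := by
  ext j
  simp [Matrix.vecMul, dotProduct, linearizedMap_apply]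

end Linearized

theorem gabidulin_is_mrd_general {Fq F : Type*} [Field Fq] [Fintype Fq] [Field F] [Algebra Fq F]
    {n k : ℕ} (hkn : k ≤ n) (α : Fin n → F)
    (hα : LinearIndependent Fq α) :
    Module.finrank F ↥(gabidulin Fq k α) = k ∧
    ∀ v ∈ gabidulin Fq k α, v ≠ 0 →
      n - k + 1 ≤ Module.finrank Fq ↥(Submodule.span Fq (Set.range v)) := by
  have hinj : Function.Injective (Matrix.vecMulLinear
      (Matrix.of fun (i : Fin k) (j : Fin n) => α j ^ (Fintype.card Fq ^ (i : ℕ)))) := by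
    rw [← LinearMap.ker_eq_bot, LinearMap.ker_eq_bot']
    intro c hc
    by_contra hc0
    have hrank := le_finrank_span_range_linearizedMap_comp Fq hα hc0
    rw [← vecMulLinear_moore_eq_linearizedMap_comp, hc, Submodule.span_eq_bot.mpr (by simp),
      finrank_bot] at hrank
    omega
  refine ⟨by rw [gabidulin, LinearMap.finrank_range_of_inj hinj, finrank_fin_fun], ?_⟩
  rintro _ ⟨c, rfl⟩ hv
  have hrank := le_finrank_span_range_linearizedMap_comp Fq hα (c := c)
    (by rintro rfl; exact hv (map_zero _))
  rw [vecMulLinear_moore_eq_linearizedMap_comp]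
  omega

/-- Gabidulin codes are MRD: for `1 ≤ k ≤ n` and `α_1, …, α_n` in an extension field `F`
of `F_q` that are linearly independent over `F_q`, the Gabidulin code
`G_{n,k}(α_1, …, α_n)` is a `k`-dimensional `F`-subspace of `F^n` and every nonzero
codeword `v` satisfies `rank_{F_q}(v) ≥ n - k + 1`. -/
theorem gabidulin_is_mrd {Fq F : Type*} [Field Fq] [Fintype Fq] [Field F] [Algebra Fq F]
    {n k : ℕ} (hk : 1 ≤ k) (hkn : k ≤ n) (α : Fin n → F)
    (hα : LinearIndependent Fq α) :
    Module.finrank F ↥(gabidulin Fq k α) = k ∧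
    ∀ v ∈ gabidulin Fq k α, v ≠ 0 →
      n - k + 1 ≤ Module.finrank Fq ↥(Submodule.span Fq (Set.range v)) :=
  gabidulin_is_mrd_general hkn α hα
end
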